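/- Let k = O(n^α) with 0 < α < 1/11 fixed, and let T₁,…,T_k be independent uniformly random spanning trees of K_n. Let M_n = k(n-1) - |T₁ ∪ ⋯ ∪ T_k| (edges counted in the union). Then for every integer a ≥ 0, P[M_n = a] ≤ (k(k-1))^a / a!. -/

import Mathlib

/-- A spanning tree of a graph `G` on a finite vertex type `V`, encoded by its edge set. -/
def spanningTrees {V : Type*} [Fintype V] (G : SimpleGraph V) : Set (Finset (Sym2 V)) :=
  {s | (s : Set (Sym2 V)) ⊆ G.edgeSet ∧ (SimpleGraph.fromEdgeSet (s : Set (Sym2 V))).IsTree}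

/-- The number of `k`-tuples `(T₁,…,T_k)` of spanning trees of `K_n` whose union has
exactly `k(n-1) - a` edges (the condition is phrased additively to avoid truncated
subtraction). -/
noncomputable def treeTupleCount (n k a : ℕ) : ℕ :=
  {t : Fin k → Finset (Sym2 (Fin n)) |
      (∀ i, t i ∈ spanningTrees (⊤ : SimpleGraph (Fin n))) ∧
      k * (n - 1) = (Finset.univ.biUnion t).card + a}.ncard

/-!
Switching. Fix an edge set `U`. Send a spanning tree `T` of `K_n`, an edge `e ∈ U ∩ T` and a
vertex `v` to the tree `T - e + vy`, where `y` is the endpoint of `e` that `T - e` separates from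
`v`. Together with `e` and a bit telling which endpoint `y` is, the new tree determines `(T, e, v)`,
so the number `A_j` of trees meeting `U` in at least `j` edges satisfies
`A_{j+1} (j+1) n ≤ A_j · 2|U|`, hence `P(|U ∩ T| ≥ c) ≤ (2|U|/n)^c / c!`.

Adding the trees one at a time, the deficit grows by `|T_{k+1} ∩ (T_1 ∪ ⋯ ∪ T_k)|`, and the union
has at most `k(n-1)` edges, so this increment is `c` with probability at most `(2k)^c / c!`. By
induction on `k`, the binomial theorem turns the convolution of `(k(k-1))^b / b!` with
`(2k)^c / c!` into `((k+1)k)^a / a!`.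
-/

open SimpleGraph Finset
open scoped Nat

section GraphLemmas

variable {V : Type*} {G : SimpleGraph V}

lemma reachable_or_reachable_deleteEdges_of_reachable {x y u : V} (h : G.Reachable x u) :
    (G.deleteEdges {s(x, y)}).Reachable x u ∨ (G.deleteEdges {s(x, y)}).Reachable y u := by
  set H := G.deleteEdges {s(x, y)}
  obtain ⟨p⟩ := h
  suffices ∀ {a b : V} (_ : G.Walk a b), H.Reachable b x ∨ H.Reachable b y →
      H.Reachable a x ∨ H.Reachable a y from (this p.reverse (.inl .rfl)).imp .symm .symm
  intro a b p
  induction p with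
  | nil => exact id
  | @cons a c _ hadj _ ih =>
    by_cases he : s(a, c) = s(x, y)
    · rcases Sym2.eq_iff.mp he with ⟨rfl, -⟩ | ⟨rfl, -⟩
      · exact fun _ => .inl .rfl
      · exact fun _ => .inr .rfl
    · have : H.Adj a c := by simp [H, hadj, he]
      exact fun hc => (ih hc).imp this.reachable.trans this.reachable.trans

lemma SimpleGraph.Reachable.deleteEdges_of_not_reachable [DecidableEq V] {x v y w : V}
    (hv : G.Reachable x v) (hy : ¬ G.Reachable x y) : (G.deleteEdges {s(w, y)}).Reachable x v := by
  obtain ⟨p⟩ := hv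
  exact ⟨p.toDeleteEdge _ fun h => hy ⟨p.takeUntil y (p.snd_mem_support_of_mem_edges h)⟩⟩

lemma edgeSet_fromEdgeSet_coe_of_not_isDiag {T : Finset (Sym2 V)} (hT : ∀ e ∈ T, ¬ e.IsDiag) :
    (fromEdgeSet (T : Set (Sym2 V))).edgeSet = T := by
  rw [edgeSet_fromEdgeSet, sdiff_eq_left, Set.disjoint_left]
  exact fun e he hd => hT e he hd

lemma fromEdgeSet_coe_erase [DecidableEq V] (T : Finset (Sym2 V)) (e : Sym2 V) :
    fromEdgeSet (T.erase e : Set (Sym2 V)) = (fromEdgeSet (T : Set (Sym2 V))).deleteEdges {e} := by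
  rw [deleteEdges, coe_erase, fromEdgeSet_sdiff]

noncomputable def Sym2.orient (e : Sym2 V) (b : Bool) : V × V :=
  if b then Quot.out e else (Quot.out e).swap

lemma Sym2.mk_orient (e : Sym2 V) (b : Bool) : s((e.orient b).1, (e.orient b).2) = e := by
  cases b
  · simp only [Sym2.orient, Bool.false_eq_true, if_false, Prod.fst_swap, Prod.snd_swap]
    rw [Sym2.eq_swap]
    exact Quot.out_eq e
  · exact Quot.out_eq e

end GraphLemmas

section SpanningTrees

variable {V : Type*} [Fintype V] {G : SimpleGraph V} {T : Finset (Sym2 V)}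

lemma not_isDiag_of_mem_spanningTrees (hT : T ∈ spanningTrees G) {e : Sym2 V} (he : e ∈ T) :
    ¬ e.IsDiag :=
  G.not_isDiag_of_mem_edgeSet (hT.1 he)

lemma card_add_one_of_mem_spanningTrees (hT : T ∈ spanningTrees G) : #T + 1 = Fintype.card V := by
  have h := (isTree_iff_connected_and_card.mp hT.2).2
  rwa [edgeSet_fromEdgeSet_coe_of_not_isDiag fun e => not_isDiag_of_mem_spanningTrees hT,
    Nat.card_coe_set_eq, Set.ncard_coe_finset, Nat.card_eq_fintype_card] at h

lemma mem_spanningTrees_top_of_connected (hdiag : ∀ e ∈ T, ¬ e.IsDiag)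
    (hconn : (fromEdgeSet (T : Set (Sym2 V))).Connected) (hcard : #T + 1 = Fintype.card V) :
    T ∈ spanningTrees (⊤ : SimpleGraph V) := by
  refine ⟨fun e he => ?_, isTree_iff_connected_and_card.mpr ⟨hconn, ?_⟩⟩
  · simpa [edgeSet_top] using hdiag e he
  · rwa [edgeSet_fromEdgeSet_coe_of_not_isDiag hdiag, Nat.card_coe_set_eq, Set.ncard_coe_finset,
      Nat.card_eq_fintype_card]

variable [DecidableEq V] {x y v : V}

lemma not_reachable_erase_of_mem_spanningTrees (hT : T ∈ spanningTrees G) (he : s(x, y) ∈ T) :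
    ¬ (fromEdgeSet (T.erase s(x, y) : Set (Sym2 V))).Reachable x y := by
  have hadj : (fromEdgeSet (T : Set (Sym2 V))).Adj x y :=
    (fromEdgeSet_adj _).mpr ⟨he, fun h => not_isDiag_of_mem_spanningTrees hT he (by simpa)⟩
  rw [fromEdgeSet_coe_erase]
  exact isAcyclic_iff_forall_adj_isBridge.mp hT.2.isAcyclic hadj

lemma reachable_or_reachable_erase_of_mem_spanningTrees (hT : T ∈ spanningTrees G) (u : V) :
    (fromEdgeSet (T.erase s(x, y) : Set (Sym2 V))).Reachable x u ∨
      (fromEdgeSet (T.erase s(x, y) : Set (Sym2 V))).Reachable y u := by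
  rw [fromEdgeSet_coe_erase]
  exact reachable_or_reachable_deleteEdges_of_reachable (hT.2.preconnected x u)

def reattach (T : Finset (Sym2 V)) (x y v : V) : Finset (Sym2 V) :=
  insert s(v, y) (T.erase s(x, y))

lemma ne_of_reachable_erase (hT : T ∈ spanningTrees G) (he : s(x, y) ∈ T)
    (hv : (fromEdgeSet (T.erase s(x, y) : Set (Sym2 V))).Reachable x v) : v ≠ y := by
  rintro rfl
  exact not_reachable_erase_of_mem_spanningTrees hT he hv

lemma notMem_erase_of_reachable_erase (hT : T ∈ spanningTrees G) (he : s(x, y) ∈ T)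
    (hv : (fromEdgeSet (T.erase s(x, y) : Set (Sym2 V))).Reachable x v) :
    s(v, y) ∉ T.erase s(x, y) := fun hvy =>
  not_reachable_erase_of_mem_spanningTrees hT he <|
    hv.trans ((fromEdgeSet_adj _).mpr ⟨hvy, ne_of_reachable_erase hT he hv⟩).reachable

lemma reattach_mem_spanningTrees (hT : T ∈ spanningTrees ⊤) (he : s(x, y) ∈ T)
    (hv : (fromEdgeSet (T.erase s(x, y) : Set (Sym2 V))).Reachable x v) :
    reattach T x y v ∈ spanningTrees ⊤ := by
  have hvy := ne_of_reachable_erase hT he hv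
  set H := fromEdgeSet (reattach T x y v : Set (Sym2 V))
  have hle : fromEdgeSet (T.erase s(x, y) : Set (Sym2 V)) ≤ H :=
    fromEdgeSet_mono (coe_subset.mpr (subset_insert _ _))
  have hyv : H.Reachable v y := ((fromEdgeSet_adj _).mpr ⟨mem_insert_self _ _, hvy⟩).reachable
  have hreach_y (u : V) : H.Reachable u y := by
    rcases reachable_or_reachable_erase_of_mem_spanningTrees hT u with hu | hu
    · exact ((hu.mono hle).symm.trans (hv.mono hle)).trans hyv
    · exact (hu.mono hle).symm
  refine mem_spanningTrees_top_of_connected (fun e he' => ?_) ?_ ?_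
  · rcases mem_insert.mp he' with rfl | he'
    · simpa using hvy
    · exact not_isDiag_of_mem_spanningTrees hT (mem_of_mem_erase he')
  · have : Nonempty V := ⟨x⟩
    exact .mk fun a b => (hreach_y a).trans (hreach_y b).symm
  · rw [reattach, card_insert_of_notMem (notMem_erase_of_reachable_erase hT he hv),
      card_erase_of_mem he, Nat.sub_add_cancel (card_pos.mpr ⟨_, he⟩)]
    exact card_add_one_of_mem_spanningTrees hT

/-- If `v₁ ≠ v₂`, the walk from `x` to `v₁` in `T₁ - xy` avoids `v₂y` (it never reaches `y`), so
it survives in `T₂ - xy`, which also contains `v₁y`; then `x` would reach `y` in `T₂ - xy`. -/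
lemma reattach_injective {T₁ T₂ : Finset (Sym2 V)} {v₁ v₂ : V}
    (hT₁ : T₁ ∈ spanningTrees G) (hT₂ : T₂ ∈ spanningTrees G)
    (he₁ : s(x, y) ∈ T₁) (he₂ : s(x, y) ∈ T₂)
    (hv₁ : (fromEdgeSet (T₁.erase s(x, y) : Set (Sym2 V))).Reachable x v₁)
    (hv₂ : (fromEdgeSet (T₂.erase s(x, y) : Set (Sym2 V))).Reachable x v₂)
    (h : reattach T₁ x y v₁ = reattach T₂ x y v₂) : v₁ = v₂ ∧ T₁ = T₂ := by
  unfold reattach at h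
  have hv : v₁ = v₂ := by
    by_contra hne
    have hf : s(v₁, y) ≠ s(v₂, y) := fun h => hne (Sym2.congr_left.mp h)
    have hf₁ : s(v₁, y) ∈ T₂.erase s(x, y) :=
      mem_of_mem_insert_of_ne (h ▸ mem_insert_self _ _) hf
    have hsub : (T₁.erase s(x, y)).erase s(v₂, y) ⊆ T₂.erase s(x, y) := fun g hg =>
      mem_of_mem_insert_of_ne (h ▸ mem_insert_of_mem (mem_of_mem_erase hg)) (ne_of_mem_erase hg)
    have hxv₁ : (fromEdgeSet (T₂.erase s(x, y) : Set (Sym2 V))).Reachable x v₁ := by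
      refine Reachable.mono (fromEdgeSet_mono (coe_subset.mpr hsub)) ?_
      rw [fromEdgeSet_coe_erase]
      exact hv₁.deleteEdges_of_not_reachable (not_reachable_erase_of_mem_spanningTrees hT₁ he₁)
    exact not_reachable_erase_of_mem_spanningTrees hT₂ he₂ <| hxv₁.trans
      ((fromEdgeSet_adj _).mpr ⟨hf₁, ne_of_reachable_erase hT₁ he₁ hv₁⟩).reachable
  subst hv
  refine ⟨rfl, ?_⟩
  have h' := congrArg (fun T => insert s(x, y) (T.erase s(v₁, y))) h
  rwa [erase_insert (notMem_erase_of_reachable_erase hT₁ he₁ hv₁),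
    erase_insert (notMem_erase_of_reachable_erase hT₂ he₂ hv₂), insert_erase he₁,
    insert_erase he₂] at h'

end SpanningTrees

section Switching

variable {V : Type*} [Fintype V] {G : SimpleGraph V} {T : Finset (Sym2 V)}

noncomputable def spanningTreeFinset (G : SimpleGraph V) : Finset (Finset (Sym2 V)) :=
  (spanningTrees G).toFinite.toFinset

lemma mem_spanningTreeFinset : T ∈ spanningTreeFinset G ↔ T ∈ spanningTrees G :=
  Set.Finite.mem_toFinset _

lemma card_of_mem_spanningTreeFinset (hT : T ∈ spanningTreeFinset G) :
    #T = Fintype.card V - 1 := by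
  have := card_add_one_of_mem_spanningTrees (mem_spanningTreeFinset.mp hT)
  omega

variable [DecidableEq V]

open Classical in
noncomputable def side (T : Finset (Sym2 V)) (e : Sym2 V) (v : V) : Bool :=
  (fromEdgeSet (T.erase e : Set (Sym2 V))).Reachable (e.orient true).1 v

lemma reachable_erase_orient_side (hT : T ∈ spanningTrees G) (e : Sym2 V) (v : V) :
    (fromEdgeSet (T.erase s((e.orient (side T e v)).1, (e.orient (side T e v)).2) :
      Set (Sym2 V))).Reachable (e.orient (side T e v)).1 v := by
  rw [e.mk_orient]
  cases h : side T e v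
  · have hp := e.mk_orient true
    have hn : ¬ (fromEdgeSet (T.erase e : Set (Sym2 V))).Reachable (e.orient true).1 v := by
      simpa [side] using h
    have hor := reachable_or_reachable_erase_of_mem_spanningTrees
      (x := (e.orient true).1) (y := (e.orient true).2) hT v
    rw [hp] at hor
    simpa [Sym2.orient] using hor.resolve_left hn
  · simpa [side] using h

/-- `(T - e + vy, e, b)`, where `y` is the endpoint of `e` not joined to `v` in `T - e` and the bit
`b` records which endpoint of `e` that is; recording it is what makes the map injective. -/
noncomputable def switchMap (T : Finset (Sym2 V)) (e : Sym2 V) (v : V) :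
    Finset (Sym2 V) × Sym2 V × Bool :=
  (reattach T (e.orient (side T e v)).1 (e.orient (side T e v)).2 v, e, side T e v)

noncomputable def treesMeetingAtLeast (G : SimpleGraph V) (U : Finset (Sym2 V)) (j : ℕ) :
    Finset (Finset (Sym2 V)) :=
  (spanningTreeFinset G).filter fun T => j ≤ #(U ∩ T)

lemma switchMap_mapsTo (U : Finset (Sym2 V)) (j : ℕ) :
    Set.MapsTo (fun z : Σ _ : Finset (Sym2 V), Sym2 V × V => switchMap z.1 z.2.1 z.2.2)
      ((treesMeetingAtLeast ⊤ U (j + 1)).sigma fun T => (U ∩ T) ×ˢ (univ : Finset V))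
      ((treesMeetingAtLeast ⊤ U j ×ˢ U ×ˢ univ : Finset (Finset (Sym2 V) × Sym2 V × Bool)) :
        Set (Finset (Sym2 V) × Sym2 V × Bool)) := by
  rintro ⟨T, e, v⟩ hz
  obtain ⟨hTA, heUT, -⟩ : T ∈ treesMeetingAtLeast ⊤ U (j + 1) ∧ e ∈ U ∩ T ∧ v ∈ univ := by
    simpa using hz
  obtain ⟨hT, hj⟩ := mem_filter.mp hTA
  rw [mem_spanningTreeFinset] at hT
  obtain ⟨heU, heT⟩ := mem_inter.mp heUT
  set b := side T e v
  have hp : s((e.orient b).1, (e.orient b).2) = e := e.mk_orient b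
  have hmem : j ≤ #(U ∩ reattach T (e.orient b).1 (e.orient b).2 v) := by
    refine le_trans ?_ (card_le_card (s := (U ∩ T).erase e) fun g hg => ?_)
    · rw [card_erase_of_mem heUT]
      omega
    · rw [reattach, hp]
      simp only [mem_erase, mem_inter] at hg ⊢
      exact ⟨hg.2.1, mem_insert_of_mem (mem_erase.mpr ⟨hg.1, hg.2.2⟩)⟩
  have htree : reattach T (e.orient b).1 (e.orient b).2 v ∈ spanningTrees ⊤ :=
    reattach_mem_spanningTrees hT (by rwa [hp]) (reachable_erase_orient_side hT e v)
  simpa [switchMap, treesMeetingAtLeast, mem_spanningTreeFinset, heU] using ⟨htree, hmem⟩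

lemma switchMap_inj {T₁ T₂ : Finset (Sym2 V)} {e₁ e₂ : Sym2 V} {v₁ v₂ : V}
    (hT₁ : T₁ ∈ spanningTrees G) (hT₂ : T₂ ∈ spanningTrees G) (he₁ : e₁ ∈ T₁) (he₂ : e₂ ∈ T₂)
    (h : switchMap T₁ e₁ v₁ = switchMap T₂ e₂ v₂) : T₁ = T₂ ∧ e₁ = e₂ ∧ v₁ = v₂ := by
  simp only [switchMap, Prod.mk.injEq] at h
  obtain ⟨hre, rfl, hb⟩ := h
  rw [hb] at hre
  have hp := e₁.mk_orient (side T₂ e₁ v₂)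
  have hv₁ := reachable_erase_orient_side hT₁ e₁ v₁
  rw [hb] at hv₁
  obtain ⟨rfl, rfl⟩ := reattach_injective hT₁ hT₂ (by rwa [hp]) (by rwa [hp]) hv₁
    (reachable_erase_orient_side hT₂ e₁ v₂) hre
  exact ⟨rfl, rfl, rfl⟩

theorem card_treesMeetingAtLeast_succ_mul_le (U : Finset (Sym2 V)) (j : ℕ) :
    #(treesMeetingAtLeast ⊤ U (j + 1)) * ((j + 1) * Fintype.card V) ≤
      #(treesMeetingAtLeast ⊤ U j) * (2 * #U) := by
  set D := (treesMeetingAtLeast ⊤ U (j + 1)).sigma fun T => (U ∩ T) ×ˢ (univ : Finset V)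
  have hD : #(treesMeetingAtLeast ⊤ U (j + 1)) * ((j + 1) * Fintype.card V) ≤ #D := by
    rw [card_sigma, ← smul_eq_mul, ← sum_const]
    refine sum_le_sum fun T hT => ?_
    rw [card_product, card_univ]
    exact Nat.mul_le_mul_right _ (mem_filter.mp hT).2
  have hinj : Set.InjOn (fun z : Σ _ : Finset (Sym2 V), Sym2 V × V => switchMap z.1 z.2.1 z.2.2)
      D := by
    rintro ⟨T₁, e₁, v₁⟩ hz₁ ⟨T₂, e₂, v₂⟩ hz₂ h
    obtain ⟨⟨hT₁, -⟩, -, he₁⟩ := by simpa [D, treesMeetingAtLeast, mem_spanningTreeFinset] using hz₁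
    obtain ⟨⟨hT₂, -⟩, -, he₂⟩ := by simpa [D, treesMeetingAtLeast, mem_spanningTreeFinset] using hz₂
    obtain ⟨rfl, rfl, rfl⟩ := switchMap_inj hT₁ hT₂ he₁ he₂ h
    rfl
  calc #(treesMeetingAtLeast ⊤ U (j + 1)) * ((j + 1) * Fintype.card V) ≤ #D := hD
    _ ≤ #(treesMeetingAtLeast ⊤ U j ×ˢ U ×ˢ (univ : Finset Bool)) :=
      card_le_card_of_injOn _ (switchMap_mapsTo U j) hinj
    _ = #(treesMeetingAtLeast ⊤ U j) * (2 * #U) := by simp [card_product, mul_comm]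

theorem card_treesMeetingAtLeast_mul_le (U : Finset (Sym2 V)) (j : ℕ) :
    #(treesMeetingAtLeast ⊤ U j) * (j ! * Fintype.card V ^ j) ≤
      #(spanningTreeFinset (⊤ : SimpleGraph V)) * (2 * #U) ^ j := by
  induction j with
  | zero => simp [treesMeetingAtLeast]
  | succ j ih =>
    calc #(treesMeetingAtLeast ⊤ U (j + 1)) * ((j + 1)! * Fintype.card V ^ (j + 1))
        = #(treesMeetingAtLeast ⊤ U (j + 1)) * ((j + 1) * Fintype.card V) *
            (j ! * Fintype.card V ^ j) := by
          rw [Nat.factorial_succ, pow_succ]; ring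
      _ ≤ #(treesMeetingAtLeast ⊤ U j) * (2 * #U) * (j ! * Fintype.card V ^ j) :=
          Nat.mul_le_mul_right _ (card_treesMeetingAtLeast_succ_mul_le U j)
      _ = #(treesMeetingAtLeast ⊤ U j) * (j ! * Fintype.card V ^ j) * (2 * #U) := by ring
      _ ≤ #(spanningTreeFinset ⊤) * (2 * #U) ^ j * (2 * #U) := Nat.mul_le_mul_right _ ih
      _ = #(spanningTreeFinset ⊤) * (2 * #U) ^ (j + 1) := by rw [pow_succ, mul_assoc]

theorem card_filter_card_inter_eq_le {U : Finset (Sym2 V)} {m : ℕ}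
    (hU : #U ≤ m * (Fintype.card V - 1)) (c : ℕ) :
    (#((spanningTreeFinset ⊤).filter fun T => #(U ∩ T) = c) : ℝ) ≤
      #(spanningTreeFinset (⊤ : SimpleGraph V)) * (2 * m) ^ c / c ! := by
  rcases eq_empty_or_nonempty ((spanningTreeFinset ⊤).filter fun T => #(U ∩ T) = c)
    with h | ⟨T, hT⟩
  · rw [h, card_empty, Nat.cast_zero]
    positivity
  have hV : 0 < Fintype.card V :=
    Fintype.card_pos_iff.mpr (mem_spanningTreeFinset.mp (mem_filter.mp hT).1).2.nonempty
  have hsub : (spanningTreeFinset ⊤).filter (fun T => #(U ∩ T) = c) ⊆ treesMeetingAtLeast ⊤ U c :=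
    fun T hT => mem_filter.mpr ⟨(mem_filter.mp hT).1, (mem_filter.mp hT).2.ge⟩
  have hU' : (2 * #U) ^ c ≤ (2 * m) ^ c * Fintype.card V ^ c := by
    rw [← mul_pow]
    exact Nat.pow_le_pow_left (by nlinarith [Nat.sub_le (Fintype.card V) 1]) c
  have hnat : #((spanningTreeFinset ⊤).filter fun T => #(U ∩ T) = c) * c ! ≤
      #(spanningTreeFinset (⊤ : SimpleGraph V)) * (2 * m) ^ c := by
    refine Nat.le_of_mul_le_mul_right ?_ (pow_pos hV c)
    calc #((spanningTreeFinset ⊤).filter fun T => #(U ∩ T) = c) * c ! * Fintype.card V ^ c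
        ≤ #(treesMeetingAtLeast ⊤ U c) * (c ! * Fintype.card V ^ c) := by
          rw [mul_assoc]; exact Nat.mul_le_mul_right _ (card_le_card hsub)
      _ ≤ #(spanningTreeFinset ⊤) * (2 * #U) ^ c := card_treesMeetingAtLeast_mul_le U c
      _ ≤ #(spanningTreeFinset ⊤) * (2 * m) ^ c * Fintype.card V ^ c := by
          rw [mul_assoc]; exact Nat.mul_le_mul_left _ hU'
  rw [le_div_iff₀ (by positivity)]
  exact_mod_cast hnat

end Switching

lemma add_pow_div_factorial {K : Type*} [Field K] [CharZero K] (x y : K) (n : ℕ) :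
    (x + y) ^ n / n ! = ∑ m ∈ range (n + 1), x ^ m / m ! * (y ^ (n - m) / (n - m)!) := by
  rw [add_pow, sum_div]
  refine sum_congr rfl fun m hm => ?_
  have hmn := Nat.le_of_lt_succ (mem_range.mp hm)
  have hchoose : (n.choose m : K) ≠ 0 := by exact_mod_cast (Nat.choose_pos hmn).ne'
  rw [← Nat.choose_mul_factorial_mul_factorial hmn]
  push_cast
  field_simp

lemma Fin.univ_biUnion_cons {α : Type*} [DecidableEq α] {k : ℕ} (T : Finset α)
    (s : Fin k → Finset α) : univ.biUnion (Fin.cons T s : Fin (k + 1) → Finset α) =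
      T ∪ univ.biUnion s := by
  ext x
  simp [Fin.exists_fin_succ]

section TreeTuples

variable (V : Type*) [Fintype V] [DecidableEq V]

noncomputable def treeTupleFinset (k a : ℕ) : Finset (Fin k → Finset (Sym2 V)) :=
  (Fintype.piFinset fun _ => spanningTreeFinset ⊤).filter
    fun t => k * (Fintype.card V - 1) = #(univ.biUnion t) + a

variable {V}

/-- The deficit of `Fin.cons T s` is the deficit `b` of `s` plus the number of edges that `T` shares
with the union of `s`. -/
lemma treeTupleFinset_succ_subset (k a : ℕ) :
    treeTupleFinset V (k + 1) a ⊆ (range (a + 1)).biUnion fun b =>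
      (treeTupleFinset V k b).biUnion fun s =>
        ((spanningTreeFinset ⊤).filter fun T => #(univ.biUnion s ∩ T) = a - b).image
          fun T => (Fin.cons T s : Fin (k + 1) → Finset (Sym2 V)) := by
  intro t ht
  obtain ⟨T, s, rfl⟩ : ∃ T s, t = Fin.cons T s := ⟨t 0, Fin.tail t, (Fin.cons_self_tail t).symm⟩
  simp only [treeTupleFinset, mem_filter, Fintype.mem_piFinset, Fin.forall_fin_succ,
    Fin.cons_zero, Fin.cons_succ, Fin.univ_biUnion_cons] at ht
  obtain ⟨⟨hT, hs⟩, hcount⟩ := ht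
  have hU : #(univ.biUnion s) ≤ k * (Fintype.card V - 1) := by
    refine card_biUnion_le.trans ?_
    rw [sum_congr rfl fun i _ => card_of_mem_spanningTreeFinset (hs i), sum_const, card_univ,
      Fintype.card_fin, smul_eq_mul]
  have hunion := card_union_add_card_inter T (univ.biUnion s)
  rw [card_of_mem_spanningTreeFinset hT, inter_comm] at hunion
  rw [Nat.succ_mul] at hcount
  refine mem_biUnion.mpr
    ⟨k * (Fintype.card V - 1) - #(univ.biUnion s), mem_range.mpr (by omega), ?_⟩
  refine mem_biUnion.mpr ⟨s, mem_filter.mpr ⟨Fintype.mem_piFinset.mpr hs, by omega⟩, ?_⟩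
  exact mem_image_of_mem _ (mem_filter.mpr ⟨hT, by omega⟩)

theorem card_treeTupleFinset_le (k a : ℕ) :
    (#(treeTupleFinset V k a) : ℝ) ≤
      #(spanningTreeFinset (⊤ : SimpleGraph V)) ^ k * ((k * (k - 1) : ℕ) : ℝ) ^ a / a ! := by
  induction k generalizing a with
  | zero =>
    rcases a with _ | a
    · have : #(treeTupleFinset V 0 0) ≤ 1 := (card_filter_le _ _).trans (by simp)
      simpa using this
    · simp [treeTupleFinset]
  | succ k ih =>
    set τ : ℝ := (#(spanningTreeFinset (⊤ : SimpleGraph V)) : ℝ)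
    have hbound (b : ℕ) (s) (hs : s ∈ treeTupleFinset V k b) :
        (#((spanningTreeFinset ⊤).filter fun T => #(univ.biUnion s ∩ T) = a - b) : ℝ) ≤
          τ * (2 * k) ^ (a - b) / (a - b)! :=
      card_filter_card_inter_eq_le (by have := (mem_filter.mp hs).2; omega) _
    have hsum : ((k * (k - 1) : ℕ) : ℝ) + 2 * k = ((k + 1) * (k + 1 - 1) : ℕ) := by
      rcases k with _ | k
      · simp
      · push_cast [Nat.add_sub_cancel]; ring
    calc (#(treeTupleFinset V (k + 1) a) : ℝ)
        ≤ ∑ b ∈ range (a + 1), ∑ s ∈ treeTupleFinset V k b,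
            (#((spanningTreeFinset ⊤).filter fun T => #(univ.biUnion s ∩ T) = a - b) : ℝ) := by
          exact_mod_cast (card_le_card (treeTupleFinset_succ_subset k a)).trans <|
            card_biUnion_le.trans <| sum_le_sum fun b _ =>
              card_biUnion_le.trans <| sum_le_sum fun s _ => card_image_le
      _ ≤ ∑ b ∈ range (a + 1), ∑ s ∈ treeTupleFinset V k b, τ * (2 * k) ^ (a - b) / (a - b)! :=
          sum_le_sum fun b _ => sum_le_sum fun s hs => hbound b s hs
      _ = ∑ b ∈ range (a + 1), #(treeTupleFinset V k b) * (τ * (2 * k) ^ (a - b) / (a - b)!) := by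
          simp only [sum_const, nsmul_eq_mul]
      _ ≤ ∑ b ∈ range (a + 1), τ ^ k * ((k * (k - 1) : ℕ) : ℝ) ^ b / b ! *
            (τ * (2 * k) ^ (a - b) / (a - b)!) := by
          gcongr with b
          exact ih b
      _ = τ ^ (k + 1) * (((k * (k - 1) : ℕ) : ℝ) + 2 * k) ^ a / a ! := by
          rw [mul_div_assoc, add_pow_div_factorial, mul_sum]
          refine sum_congr rfl fun b _ => ?_
          ring
      _ = τ ^ (k + 1) * (((k + 1) * (k + 1 - 1) : ℕ) : ℝ) ^ a / a ! := by rw [hsum]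

end TreeTuples

theorem tree_union_deficiency_upper_bound_general (k : ℕ → ℕ) (n a : ℕ) :
    (treeTupleCount n (k n) a : ℝ) /
        (((spanningTrees (⊤ : SimpleGraph (Fin n))).ncard : ℝ) ^ (k n)) ≤
      ((k n * (k n - 1) : ℕ) : ℝ) ^ a / (Nat.factorial a) := by
  have hcount : treeTupleCount n (k n) a = #(treeTupleFinset (Fin n) (k n) a) := by
    rw [treeTupleCount, ← Set.ncard_coe_finset]
    congr
    ext t
    simp [treeTupleFinset, mem_spanningTreeFinset]
  have htrees : (spanningTrees (⊤ : SimpleGraph (Fin n))).ncard =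
      #(spanningTreeFinset (⊤ : SimpleGraph (Fin n))) := by
    rw [← Set.ncard_coe_finset, spanningTreeFinset, Set.Finite.coe_toFinset]
  rw [hcount, htrees]
  refine div_le_of_le_mul₀ (by positivity) (by positivity) ?_
  rw [div_mul_eq_mul_div, mul_comm]
  exact card_treeTupleFinset_le (k n) a

/-- Claim 1 of the paper. Let `k = O(n^α)` with `0 < α < 1/11` fixed, and
let `T₁,…,T_k` be independent uniformly random spanning trees of `K_n`. With
`M_n = k(n-1) - |T₁ ∪ ⋯ ∪ T_k|`, for every integer `a ≥ 0` we have
`P[M_n = a] ≤ (k(k-1))^a / a!`. -/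
theorem tree_union_deficiency_upper_bound (α : ℝ) (hα : 0 < α) (hα' : α < 1 / 11)
    (B : ℝ) (hB : 0 < B) (k : ℕ → ℕ) (hk : ∀ n : ℕ, (k n : ℝ) ≤ B * (n : ℝ) ^ α)
    (n a : ℕ) :
    (treeTupleCount n (k n) a : ℝ) /
        (((spanningTrees (⊤ : SimpleGraph (Fin n))).ncard : ℝ) ^ (k n)) ≤
      ((k n * (k n - 1) : ℕ) : ℝ) ^ a / (Nat.factorial a) :=
  tree_union_deficiency_upper_bound_general k n a
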